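/- arXiv:2006.16073 — 6 statements merged into one kernel-verified Lean document; each statement's English description precedes it below -/
import Mathlib

section
/- Suppose the matrix ∑_{a∈𝒜} w_a a aᵀ is positive definite. Then ψ(μ, w) = min_{a ∈ 𝒜∖{a*_μ}} (μᵀ(a*_μ − a))² / (2 (a*_μ − a)ᵀ (∑_{a'∈𝒜} w_{a'} a' a'ᵀ)⁻¹ (a*_μ − a)). If instead ∑_{a∈𝒜} w_a a aᵀ is not invertible, then ψ(μ, w) = 0. -/
/-!
Write `V = ∑ₐ wₐ a aᵀ` and `‖u‖²_V = u ⬝ᵥ V u`. The bad set is the union, over suboptimal arms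
`a`, of the open half-spaces `{λ | λ ⬝ᵥ x < 0}` with `x = a* - a`, so `ψ` is the smallest of the
infima of `½ ‖μ - λ‖²_V` over these half-spaces. When `V` is positive definite, Cauchy–Schwarz in
the form `(u ⬝ᵥ x)² ≤ ‖u‖²_V ‖x‖²_{V⁻¹}` bounds each infimum below by `(μ ⬝ᵥ x)² / (2 ‖x‖²_{V⁻¹})`,
and this value is approached along the ray `μ - t V⁻¹ x` as `t` decreases to
`μ ⬝ᵥ x / ‖x‖²_{V⁻¹}`.

When `V` is singular, take `v ≠ 0` with `V v = 0`. Then `v` is orthogonal to every arm of positive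
weight; as the arms span, `v ⬝ᵥ (a* - a) ≠ 0` for some arm `a`, and moving `μ` along `v` reaches
the half-space of `a` at zero cost.
-/

open Matrix

/-- The design matrix `∑_{a ∈ 𝒜} w_a a aᵀ` associated with an allocation `w`. -/
noncomputable def armMatrix {d : ℕ} (𝒜 : Finset (Fin d → ℝ)) (w : {a // a ∈ 𝒜} → ℝ) :
    Matrix (Fin d) (Fin d) ℝ :=
  ∑ a : {a // a ∈ 𝒜}, w a • vecMulVec (a : Fin d → ℝ) (a : Fin d → ℝ)

/-- The simplex `Λ = {w ∈ [0,1]^𝒜 : ∑_a w_a = 1}` of allocations over `𝒜`. -/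
def simplexOn {d : ℕ} (𝒜 : Finset (Fin d → ℝ)) : Set ({a // a ∈ 𝒜} → ℝ) :=
  {w | (∀ a, 0 ≤ w a ∧ w a ≤ 1) ∧ ∑ a, w a = 1}

/-- `astar` is the unique best arm of `𝒜` for the parameter `μ`. -/
def IsBestArm {d : ℕ} (𝒜 : Finset (Fin d → ℝ)) (μ astar : Fin d → ℝ) : Prop :=
  astar ∈ 𝒜 ∧ ∀ a ∈ 𝒜, a ≠ astar → μ ⬝ᵥ a < μ ⬝ᵥ astar

/-- The best arm `a*_μ = argmax_{a ∈ 𝒜} μᵀa` (defined via choice when it exists). -/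
noncomputable def bestArm {d : ℕ} (𝒜 : Finset (Fin d → ℝ)) (μ : Fin d → ℝ) : Fin d → ℝ :=
  open scoped Classical in
  if h : ∃ a, IsBestArm 𝒜 μ a then h.choose else 0

/-- The set of bad parameters
`B(μ) = {λ ∈ ℝ^d : ∃ a ∈ 𝒜 ∖ {a*_μ}, λᵀ(a*_μ − a) < 0}`. -/
def badSet {d : ℕ} (𝒜 : Finset (Fin d → ℝ)) (μ : Fin d → ℝ) : Set (Fin d → ℝ) :=
  {lam | ∃ a ∈ 𝒜, a ≠ bestArm 𝒜 μ ∧ lam ⬝ᵥ (bestArm 𝒜 μ - a) < 0}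

/-- `ψ(μ, w) = inf_{λ ∈ B(μ)} ½ (μ−λ)ᵀ (∑_a w_a a aᵀ) (μ−λ)`. -/
noncomputable def psi {d : ℕ} (𝒜 : Finset (Fin d → ℝ)) (μ : Fin d → ℝ)
    (w : {a // a ∈ 𝒜} → ℝ) : ℝ :=
  sInf ((fun lam => (1 / 2) * ((μ - lam) ⬝ᵥ (armMatrix 𝒜 w).mulVec (μ - lam))) '' badSet 𝒜 μ)

open Filter Topology

section QuadraticForm

variable {n : Type*} [Fintype n] [DecidableEq n] {V : Matrix n n ℝ}

lemma Matrix.PosDef.mulVec_inv_mulVec (hV : V.PosDef) (x : n → ℝ) : V *ᵥ (V⁻¹ *ᵥ x) = x := by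
  rw [mulVec_mulVec, mul_nonsing_inv _ ((isUnit_iff_isUnit_det V).1 hV.isUnit), one_mulVec]

lemma Matrix.PosDef.dotProduct_sq_le (hV : V.PosDef) (u x : n → ℝ) :
    (u ⬝ᵥ x) ^ 2 ≤ (u ⬝ᵥ V *ᵥ u) * (x ⬝ᵥ V⁻¹ *ᵥ x) := by
  set p := V⁻¹ *ᵥ x
  have hVp : V *ᵥ p = x := hV.mulVec_inv_mulVec x
  have hpu : p ⬝ᵥ V *ᵥ u = u ⬝ᵥ x := by
    rw [dotProduct_mulVec, ← mulVec_transpose, ← conjTranspose_eq_transpose_of_trivial,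
      hV.isHermitian.eq, hVp, dotProduct_comm]
  have hCS := LinearMap.BilinForm.apply_mul_apply_le_of_forall_zero_le (toLinearMap₂' ℝ V)
    (fun y => by simpa [toLinearMap₂'_apply'] using hV.posSemidef.dotProduct_mulVec_nonneg y) u p
  simp only [toLinearMap₂'_apply', hVp, hpu] at hCS
  rwa [← sq, dotProduct_comm p x] at hCS

theorem Matrix.PosDef.isGLB_image_halfspace (hV : V.PosDef) (μ : n → ℝ) {x : n → ℝ}
    (hx : x ≠ 0) (hμx : 0 ≤ μ ⬝ᵥ x) :
    IsGLB ((fun lam => 1 / 2 * ((μ - lam) ⬝ᵥ V *ᵥ (μ - lam))) '' {lam | lam ⬝ᵥ x < 0})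
      ((μ ⬝ᵥ x) ^ 2 / (2 * (x ⬝ᵥ V⁻¹ *ᵥ x))) := by
  set m := μ ⬝ᵥ x
  set c := x ⬝ᵥ V⁻¹ *ᵥ x
  have hc : 0 < c := by simpa using hV.inv.dotProduct_mulVec_pos hx
  constructor
  · rintro _ ⟨lam, hlam, rfl⟩
    have hm : m ≤ (μ - lam) ⬝ᵥ x := by
      rw [sub_dotProduct]
      linarith [show lam ⬝ᵥ x < 0 from hlam]
    have hCS := hV.dotProduct_sq_le (μ - lam) x
    rw [div_le_iff₀ (by positivity)]
    nlinarith
  · intro y hy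
    set p := V⁻¹ *ᵥ x
    have hray (t : ℝ) : 1 / 2 * ((μ - (μ - t • p)) ⬝ᵥ V *ᵥ (μ - (μ - t • p))) = t ^ 2 * c / 2 := by
      rw [sub_sub_cancel, mulVec_smul, hV.mulVec_inv_mulVec, dotProduct_smul, smul_dotProduct,
        dotProduct_comm p x, smul_eq_mul, smul_eq_mul]
      ring
    have hmem {t : ℝ} (ht : m / c < t) : (μ - t • p) ⬝ᵥ x < 0 := by
      rw [sub_dotProduct, smul_dotProduct, dotProduct_comm p x, smul_eq_mul]
      have := (div_lt_iff₀ hc).1 ht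
      linarith
    have hlim : Tendsto (fun t => t ^ 2 * c / 2) (𝓝[>] (m / c)) (𝓝 (m ^ 2 / (2 * c))) := by
      have hval : (m / c) ^ 2 * c / 2 = m ^ 2 / (2 * c) := by field_simp
      rw [← hval]
      exact ((continuous_pow 2).mul continuous_const |>.div_const 2).continuousAt.tendsto.mono_left
        nhdsWithin_le_nhds
    refine ge_of_tendsto hlim ?_
    filter_upwards [self_mem_nhdsWithin] with t ht
    rw [← hray]
    exact hy ⟨_, hmem ht, rfl⟩

lemma eq_zero_of_forall_dotProduct_eq_zero {s : Set (n → ℝ)} (hspan : Submodule.span ℝ s = ⊤)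
    {v : n → ℝ} (hv : ∀ a ∈ s, v ⬝ᵥ a = 0) : v = 0 :=
  (dotProductEquiv ℝ n).injective <| LinearMap.ext_on hspan fun a ha => by simpa using hv a ha

end QuadraticForm

section Bandit

variable {d : ℕ} {𝒜 : Finset (Fin d → ℝ)} {μ : Fin d → ℝ} {w : {a // a ∈ 𝒜} → ℝ}

lemma isBestArm_bestArm (h : ∃ a, IsBestArm 𝒜 μ a) : IsBestArm 𝒜 μ (bestArm 𝒜 μ) := by
  rw [bestArm, dif_pos h]
  exact h.choose_spec

lemma IsBestArm.dotProduct_sub_pos {b a : Fin d → ℝ} (hb : IsBestArm 𝒜 μ b) (ha : a ∈ 𝒜)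
    (hab : a ≠ b) : 0 < μ ⬝ᵥ (b - a) := by
  rw [dotProduct_sub]
  linarith [hb.2 a ha hab]

lemma dotProduct_armMatrix_mulVec (u : Fin d → ℝ) :
    u ⬝ᵥ armMatrix 𝒜 w *ᵥ u = ∑ a, w a * ((a : Fin d → ℝ) ⬝ᵥ u) ^ 2 := by
  simp only [armMatrix, sum_mulVec, smul_mulVec, vecMulVec_mulVec, dotProduct_sum,
    dotProduct_smul]
  refine Finset.sum_congr rfl fun a _ => ?_
  simp [dotProduct_comm u, sq]

lemma dotProduct_armMatrix_mulVec_nonneg (hw : ∀ a, 0 ≤ w a) (u : Fin d → ℝ) :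
    0 ≤ u ⬝ᵥ armMatrix 𝒜 w *ᵥ u := by
  rw [dotProduct_armMatrix_mulVec]
  exact Finset.sum_nonneg fun a _ => mul_nonneg (hw a) (sq_nonneg _)

lemma dotProduct_eq_zero_of_armMatrix_mulVec_eq_zero (hw : ∀ a, 0 ≤ w a) {v : Fin d → ℝ}
    (hv : armMatrix 𝒜 w *ᵥ v = 0) {a : {a // a ∈ 𝒜}} (ha : w a ≠ 0) :
    (a : Fin d → ℝ) ⬝ᵥ v = 0 := by
  have hsum := dotProduct_armMatrix_mulVec (𝒜 := 𝒜) (w := w) v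
  rw [hv, dotProduct_zero, eq_comm, Finset.sum_eq_zero_iff_of_nonneg
    fun a _ => mul_nonneg (hw a) (sq_nonneg _)] at hsum
  simpa [ha] using hsum a (Finset.mem_univ a)

lemma badSet_eq_iUnion :
    badSet 𝒜 μ =
      ⋃ a : {a | a ∈ 𝒜 ∧ a ≠ bestArm 𝒜 μ}, {lam | lam ⬝ᵥ (bestArm 𝒜 μ - (a : Fin d → ℝ)) < 0} := by
  ext lam
  simp [badSet, and_assoc]

lemma psi_eq_sInf_of_posDef (hb : IsBestArm 𝒜 μ (bestArm 𝒜 μ)) (hV : (armMatrix 𝒜 w).PosDef) :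
    psi 𝒜 μ w = sInf ((fun a => (μ ⬝ᵥ (bestArm 𝒜 μ - a)) ^ 2 /
        (2 * ((bestArm 𝒜 μ - a) ⬝ᵥ (armMatrix 𝒜 w)⁻¹.mulVec (bestArm 𝒜 μ - a)))) ''
      {a | a ∈ 𝒜 ∧ a ≠ bestArm 𝒜 μ}) := by
  set S := {a | a ∈ 𝒜 ∧ a ≠ bestArm 𝒜 μ}
  rcases S.eq_empty_or_nonempty with hS | hS
  · have hbad : badSet 𝒜 μ = ∅ := Set.eq_empty_of_forall_notMem
      fun _ ⟨a, ha, hne, _⟩ => Set.eq_empty_iff_forall_notMem.1 hS a ⟨ha, hne⟩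
    simp [psi, hbad, hS]
  · have : Nonempty S := hS.to_subtype
    have : Finite S := (𝒜.finite_toSet.subset fun a (ha : a ∈ S) => ha.1).to_subtype
    refine (fun h : IsGLB _ _ => h.csInf_eq h.nonempty) ?_
    rw [badSet_eq_iUnion, Set.image_iUnion, ← isGLB_iUnion_iff_of_isGLB fun a =>
      hV.isGLB_image_halfspace μ (sub_ne_zero.2 a.2.2.symm) (hb.dotProduct_sub_pos a.2.1 a.2.2).le,
      Set.image_eq_range]
    exact isGLB_csInf (Set.range_nonempty _) (Set.finite_range _).bddBelow

lemma psi_eq_zero_of_mulVec_eq_zero (hw : ∀ a, 0 ≤ w a) {lam : Fin d → ℝ}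
    (hlam : lam ∈ badSet 𝒜 μ) (hker : armMatrix 𝒜 w *ᵥ (μ - lam) = 0) : psi 𝒜 μ w = 0 := by
  have hnonneg : ∀ y ∈ (fun lam => 1 / 2 * ((μ - lam) ⬝ᵥ armMatrix 𝒜 w *ᵥ (μ - lam))) ''
      badSet 𝒜 μ, 0 ≤ y := by
    rintro _ ⟨l, -, rfl⟩
    exact mul_nonneg (by norm_num) (dotProduct_armMatrix_mulVec_nonneg hw (μ - l))
  refine le_antisymm ?_ (Real.sInf_nonneg hnonneg)
  calc psi 𝒜 μ w ≤ 1 / 2 * ((μ - lam) ⬝ᵥ armMatrix 𝒜 w *ᵥ (μ - lam)) :=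
        csInf_le ⟨0, hnonneg⟩ ⟨lam, hlam, rfl⟩
    _ = 0 := by rw [hker, dotProduct_zero, mul_zero]

lemma psi_eq_zero_of_not_isUnit_det (hspan : Submodule.span ℝ (𝒜 : Set (Fin d → ℝ)) = ⊤)
    (hw : w ∈ simplexOn 𝒜) (hdet : ¬IsUnit (armMatrix 𝒜 w).det) : psi 𝒜 μ w = 0 := by
  obtain ⟨v, hv, hVv⟩ := exists_mulVec_eq_zero_iff.2 (not_ne_iff.1 fun h => hdet h.isUnit)
  obtain ⟨a₀, hwa₀⟩ : ∃ a, w a ≠ 0 := by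
    by_contra! h
    simp [simplexOn, h] at hw
  have hva₀ := dotProduct_eq_zero_of_armMatrix_mulVec_eq_zero (fun a => (hw.1 a).1) hVv hwa₀
  obtain ⟨a, ha, hva⟩ : ∃ a ∈ 𝒜, v ⬝ᵥ (bestArm 𝒜 μ - a) ≠ 0 := by
    by_contra! h
    refine hv (eq_zero_of_forall_dotProduct_eq_zero hspan fun a ha => ?_)
    have h₁ := h a ha
    have h₀ := h a₀ a₀.2
    rw [dotProduct_sub] at h₁ h₀
    rw [dotProduct_comm] at hva₀
    linarith
  set x := bestArm 𝒜 μ - a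
  refine psi_eq_zero_of_mulVec_eq_zero (fun a => (hw.1 a).1)
    (lam := μ - ((μ ⬝ᵥ x + 1) / (v ⬝ᵥ x)) • v) ⟨a, ha, ?_, ?_⟩ ?_
  · rintro rfl
    simp [x] at hva
  · rw [sub_dotProduct, smul_dotProduct, smul_eq_mul, div_mul_cancel₀ _ hva]
    linarith
  · rw [sub_sub_cancel, mulVec_smul, hVv, smul_zero]

end Bandit

/-- If `∑_a w_a a aᵀ` is positive definite then
`ψ(μ,w) = min_{a ∈ 𝒜∖{a*_μ}} (μᵀ(a*_μ − a))² / (2 (a*_μ − a)ᵀ (∑_a w_a a aᵀ)⁻¹ (a*_μ − a))`;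
if `∑_a w_a a aᵀ` is not invertible then `ψ(μ,w) = 0`. -/
theorem psi_closed_form {d : ℕ} (𝒜 : Finset (Fin d → ℝ))
    (hspan : Submodule.span ℝ (𝒜 : Set (Fin d → ℝ)) = ⊤)
    (μ : Fin d → ℝ) (hstar : ∃! astar, IsBestArm 𝒜 μ astar)
    (w : {a // a ∈ 𝒜} → ℝ) (hw : w ∈ simplexOn 𝒜) :
    ((armMatrix 𝒜 w).PosDef →
      psi 𝒜 μ w = sInf ((fun a => (μ ⬝ᵥ (bestArm 𝒜 μ - a)) ^ 2 /
          (2 * ((bestArm 𝒜 μ - a) ⬝ᵥ (armMatrix 𝒜 w)⁻¹.mulVec (bestArm 𝒜 μ - a)))) ''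
        {a | a ∈ 𝒜 ∧ a ≠ bestArm 𝒜 μ})) ∧
    (¬IsUnit (armMatrix 𝒜 w).det → psi 𝒜 μ w = 0) :=
  ⟨psi_eq_sInf_of_posDef (isBestArm_bestArm hstar.exists), psi_eq_zero_of_not_isUnit_det hspan hw⟩
end

section
/- The function ψ is jointly continuous at (μ, w) for every w ∈ Λ: there is an open neighborhood U of μ such that for every μ' ∈ U the best arm a*_{μ'} is unique, and for every sequence (μ_t, w_t) in U × Λ converging to (μ, w), ψ(μ_t, w_t) converges to ψ(μ, w). -/
open Matrix

/-!
Near `μ` the best arm stays `a*`, so `B(μ')` is the fixed union `S` of the open half-spaces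
`{λ | λᵀ(a* − a) < 0}` and `ψ(μ', w')` is the infimum over `S` of `½ ‖μ' − λ‖²_{V(w')}`,
where `V(w') = ∑ w'_a a aᵀ`.
Being an infimum of functions continuous in `(μ', w')`, it is upper semicontinuous.
For the lower bound, if `r μᵀ(a* − a) ≤ μ'ᵀ(a* − a)` for every arm then `λ ↦ μ − r⁻¹ (μ' − λ)`
maps `S` into `S` and multiplies the objective by `r⁻²`; together with `V(w') ≥ r V(w)` this gives
`ψ(μ', w') ≥ r³ ψ(μ, w)` for `(μ', w')` close to `(μ, w)`, where `r < 1` is arbitrary.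
-/

open Filter Topology

theorem eventually_sInf_image_lt {α X : Type*} {l : Filter α} {g : α → X → ℝ} {g₀ : X → ℝ}
    {S : Set X} (hS : S.Nonempty) (hg : ∀ x ∈ S, Tendsto (fun t => g t x) l (𝓝 (g₀ x)))
    (hbdd : ∀ᶠ t in l, BddBelow (g t '' S)) {b : ℝ} (hb : sInf (g₀ '' S) < b) :
    ∀ᶠ t in l, sInf (g t '' S) < b := by
  obtain ⟨_, ⟨x, hx, rfl⟩, hxb⟩ := exists_lt_of_csInf_lt (hS.image g₀) hb
  filter_upwards [(hg x hx).eventually (gt_mem_nhds hxb), hbdd] with t ht hbddt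
  exact (csInf_le hbddt ⟨x, hx, rfl⟩).trans_lt ht

theorem exists_mem_Ioo_lt_pow_mul {a L : ℝ} (h : a < L) (n : ℕ) :
    ∃ r ∈ Set.Ioo (0 : ℝ) 1, a < r ^ n * L := by
  have hlim : Tendsto (fun r : ℝ => r ^ n * L) (𝓝[<] 1) (𝓝 L) :=
    (((continuous_pow n).mul continuous_const).tendsto' 1 L (by simp)).mono_left
      nhdsWithin_le_nhds
  have hIoo : ∀ᶠ r in 𝓝[<] (1 : ℝ), r ∈ Set.Ioo (0 : ℝ) 1 := Ioo_mem_nhdsLT zero_lt_one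
  obtain ⟨r, hr, hrL⟩ := (hIoo.and (hlim.eventually (lt_mem_nhds h))).exists
  exact ⟨r, hr, hrL⟩

theorem eventually_forall_mul_le {α ι : Type*} [Finite ι] {l : Filter α} {v : α → ι → ℝ}
    {w : ι → ℝ} (hv : Tendsto v l (𝓝 w)) (hw : ∀ i, 0 ≤ w i) (hv0 : ∀ᶠ t in l, ∀ i, 0 ≤ v t i)
    {r : ℝ} (hr : r < 1) : ∀ᶠ t in l, ∀ i, r * w i ≤ v t i := by
  refine eventually_all.2 fun i => (hw i).eq_or_lt.elim (fun h0 => ?_) (fun hpos => ?_)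
  · filter_upwards [hv0] with t ht
    simpa [← h0] using ht i
  · filter_upwards [(tendsto_pi_nhds.1 hv i).eventually
      (lt_mem_nhds (mul_lt_of_lt_one_left hpos hr))] with t ht using ht.le

section Arms

variable {d : ℕ} {𝒜 : Finset (Fin d → ℝ)}

theorem IsBestArm.unique {μ a b : Fin d → ℝ} (ha : IsBestArm 𝒜 μ a) (hb : IsBestArm 𝒜 μ b) :
    a = b := by
  by_contra hne
  exact (ha.2 b hb.1 (Ne.symm hne)).not_gt (hb.2 a ha.1 hne)

theorem bestArm_eq_of_isBestArm {μ astar : Fin d → ℝ} (h : IsBestArm 𝒜 μ astar) :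
    bestArm 𝒜 μ = astar := by
  have hex : ∃ a, IsBestArm 𝒜 μ a := ⟨astar, h⟩
  rw [bestArm, dif_pos hex]
  exact hex.choose_spec.unique h

theorem isOpen_setOf_isBestArm (𝒜 : Finset (Fin d → ℝ)) (astar : Fin d → ℝ) :
    IsOpen {μ | IsBestArm 𝒜 μ astar} := by
  rw [isOpen_iff_mem_nhds]
  rintro μ ⟨hmem, hbest⟩
  have hcont (a : Fin d → ℝ) : Continuous fun m : Fin d → ℝ => m ⬝ᵥ a :=
    continuous_id.dotProduct continuous_const
  have hnear : ∀ a ∈ 𝒜, ∀ᶠ m in 𝓝 μ, a ≠ astar → m ⬝ᵥ a < m ⬝ᵥ astar := fun a ha =>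
    eventually_imp_distrib_left.2 fun hne =>
      (hcont a).continuousAt.eventually_lt (hcont astar).continuousAt (hbest a ha hne)
  filter_upwards [(eventually_all_finset 𝒜).2 hnear] with m hm using ⟨hmem, hm⟩

def altSet (𝒜 : Finset (Fin d → ℝ)) (astar : Fin d → ℝ) : Set (Fin d → ℝ) :=
  {lam | ∃ a ∈ 𝒜, a ≠ astar ∧ lam ⬝ᵥ (astar - a) < 0}

theorem badSet_eq_altSet {μ astar : Fin d → ℝ} (h : IsBestArm 𝒜 μ astar) :
    badSet 𝒜 μ = altSet 𝒜 astar := by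
  rw [badSet, bestArm_eq_of_isBestArm h, altSet]

theorem sub_inv_smul_sub_mem_altSet {μ m lam astar : Fin d → ℝ} {r : ℝ} (hr : 0 < r)
    (hm : ∀ a ∈ 𝒜, a ≠ astar → r * (μ ⬝ᵥ (astar - a)) ≤ m ⬝ᵥ (astar - a))
    (hlam : lam ∈ altSet 𝒜 astar) : μ - r⁻¹ • (m - lam) ∈ altSet 𝒜 astar := by
  obtain ⟨a, ha, hne, hlt⟩ := hlam
  refine ⟨a, ha, hne, ?_⟩
  have hdot : (μ - r⁻¹ • (m - lam)) ⬝ᵥ (astar - a)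
      = r⁻¹ * (r * (μ ⬝ᵥ (astar - a)) - m ⬝ᵥ (astar - a) + lam ⬝ᵥ (astar - a)) := by
    simp only [sub_dotProduct, smul_dotProduct, smul_eq_mul]
    field_simp
    ring
  rw [hdot]
  exact mul_neg_of_pos_of_neg (inv_pos.2 hr) (by linarith [hm a ha hne])

theorem IsBestArm.eventually_mul_dotProduct_sub_le {α : Type*} {l : Filter α}
    {μ astar : Fin d → ℝ} {m : α → Fin d → ℝ} (hμ : IsBestArm 𝒜 μ astar)
    (hm : Tendsto m l (𝓝 μ)) {r : ℝ} (hr : r < 1) :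
    ∀ᶠ t in l, ∀ a ∈ 𝒜, a ≠ astar → r * (μ ⬝ᵥ (astar - a)) ≤ m t ⬝ᵥ (astar - a) := by
  refine (eventually_all_finset 𝒜).2 fun a ha => eventually_imp_distrib_left.2 fun hne => ?_
  have hgap : 0 < μ ⬝ᵥ (astar - a) := by
    rw [dotProduct_sub]
    exact sub_pos.2 (hμ.2 a ha hne)
  have hlim : Tendsto (fun t => m t ⬝ᵥ (astar - a)) l (𝓝 (μ ⬝ᵥ (astar - a))) :=
    ((continuous_id.dotProduct continuous_const).tendsto μ).comp hm
  filter_upwards [hlim.eventually (lt_mem_nhds (mul_lt_of_lt_one_left hgap hr))] with t ht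
  exact ht.le

end Arms

section Objective

variable {d : ℕ} {𝒜 : Finset (Fin d → ℝ)}

noncomputable def psiObjective (𝒜 : Finset (Fin d → ℝ)) (μ : Fin d → ℝ)
    (w : {a // a ∈ 𝒜} → ℝ) (lam : Fin d → ℝ) : ℝ :=
  (1 / 2) * ((μ - lam) ⬝ᵥ (armMatrix 𝒜 w).mulVec (μ - lam))

theorem psi_eq_sInf_psiObjective {μ astar : Fin d → ℝ} (h : IsBestArm 𝒜 μ astar)
    (w : {a // a ∈ 𝒜} → ℝ) : psi 𝒜 μ w = sInf (psiObjective 𝒜 μ w '' altSet 𝒜 astar) := by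
  rw [psi, badSet_eq_altSet h]
  rfl

theorem psiObjective_eq_sum (μ : Fin d → ℝ) (w : {a // a ∈ 𝒜} → ℝ) (lam : Fin d → ℝ) :
    psiObjective 𝒜 μ w lam = 1 / 2 * ∑ a, w a * ((a : Fin d → ℝ) ⬝ᵥ (μ - lam)) ^ 2 := by
  simp only [psiObjective, armMatrix, sum_mulVec, smul_mulVec, vecMulVec_mulVec, dotProduct_sum,
    dotProduct_smul, op_smul_eq_mul, smul_eq_mul]
  congr 1
  refine Finset.sum_congr rfl fun a _ => ?_
  rw [dotProduct_comm]
  ring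

theorem psiObjective_nonneg {w : {a // a ∈ 𝒜} → ℝ} (hw : ∀ a, 0 ≤ w a) (μ lam : Fin d → ℝ) :
    0 ≤ psiObjective 𝒜 μ w lam := by
  rw [psiObjective_eq_sum]
  exact mul_nonneg (by norm_num) (Finset.sum_nonneg fun a _ => mul_nonneg (hw a) (sq_nonneg _))

theorem mul_psiObjective_le {v w : {a // a ∈ 𝒜} → ℝ} {r : ℝ} (h : ∀ a, r * w a ≤ v a)
    (μ lam : Fin d → ℝ) : r * psiObjective 𝒜 μ w lam ≤ psiObjective 𝒜 μ v lam := by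
  rw [psiObjective_eq_sum, psiObjective_eq_sum, mul_left_comm, Finset.mul_sum]
  refine mul_le_mul_of_nonneg_left (Finset.sum_le_sum fun a _ => ?_) (by norm_num)
  rw [← mul_assoc]
  exact mul_le_mul_of_nonneg_right (h a) (sq_nonneg _)

theorem psiObjective_sub_smul (μ m lam : Fin d → ℝ) (w : {a // a ∈ 𝒜} → ℝ) (s : ℝ) :
    psiObjective 𝒜 μ w (μ - s • (m - lam)) = s ^ 2 * psiObjective 𝒜 m w lam := by
  simp only [psiObjective, sub_sub_cancel, mulVec_smul, smul_dotProduct, dotProduct_smul,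
    smul_eq_mul]
  ring

theorem continuous_psiObjective (lam : Fin d → ℝ) :
    Continuous fun p : (Fin d → ℝ) × ({a // a ∈ 𝒜} → ℝ) => psiObjective 𝒜 p.1 p.2 lam := by
  have hmat : Continuous fun w : {a // a ∈ 𝒜} → ℝ => armMatrix 𝒜 w :=
    continuous_finsetSum _ fun a _ => (continuous_apply a).smul continuous_const
  have hsub : Continuous fun p : (Fin d → ℝ) × ({a // a ∈ 𝒜} → ℝ) => p.1 - lam :=
    continuous_fst.sub continuous_const
  exact continuous_const.mul (hsub.dotProduct ((hmat.comp continuous_snd).matrix_mulVec hsub))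

theorem pow_three_mul_sInf_psiObjective_le {μ m astar : Fin d → ℝ} {v w : {a // a ∈ 𝒜} → ℝ}
    (hS : (altSet 𝒜 astar).Nonempty) (hw : ∀ a, 0 ≤ w a) {r : ℝ} (hr : 0 < r)
    (hv : ∀ a, r * w a ≤ v a)
    (hm : ∀ a ∈ 𝒜, a ≠ astar → r * (μ ⬝ᵥ (astar - a)) ≤ m ⬝ᵥ (astar - a)) :
    r ^ 3 * sInf (psiObjective 𝒜 μ w '' altSet 𝒜 astar) ≤
      sInf (psiObjective 𝒜 m v '' altSet 𝒜 astar) := by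
  have hbdd : BddBelow (psiObjective 𝒜 μ w '' altSet 𝒜 astar) :=
    ⟨0, by rintro _ ⟨lam, -, rfl⟩; exact psiObjective_nonneg hw μ lam⟩
  refine le_csInf (hS.image _) ?_
  rintro _ ⟨lam, hlam, rfl⟩
  calc r ^ 3 * sInf (psiObjective 𝒜 μ w '' altSet 𝒜 astar)
      ≤ r ^ 3 * psiObjective 𝒜 μ w (μ - r⁻¹ • (m - lam)) := by
        gcongr
        exact csInf_le hbdd ⟨_, sub_inv_smul_sub_mem_altSet hr hm hlam, rfl⟩
    _ = r * psiObjective 𝒜 m w lam := by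
        rw [psiObjective_sub_smul]
        field_simp
    _ ≤ psiObjective 𝒜 m v lam := mul_psiObjective_le hv m lam

end Objective

theorem tendsto_sInf_psiObjective {α : Type*} {l : Filter α} {d : ℕ} {𝒜 : Finset (Fin d → ℝ)}
    {μ astar : Fin d → ℝ} {w : {a // a ∈ 𝒜} → ℝ} {m : α → Fin d → ℝ} {v : α → {a // a ∈ 𝒜} → ℝ}
    (hμ : IsBestArm 𝒜 μ astar) (hw : ∀ a, 0 ≤ w a) (hv0 : ∀ᶠ t in l, ∀ a, 0 ≤ v t a)
    (hm : Tendsto m l (𝓝 μ)) (hv : Tendsto v l (𝓝 w)) :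
    Tendsto (fun t => sInf (psiObjective 𝒜 (m t) (v t) '' altSet 𝒜 astar)) l
      (𝓝 (sInf (psiObjective 𝒜 μ w '' altSet 𝒜 astar))) := by
  rcases (altSet 𝒜 astar).eq_empty_or_nonempty with hS | hS
  · simpa [hS] using tendsto_const_nhds
  refine tendsto_order.2 ⟨fun a ha => ?_, fun b hb => ?_⟩
  · obtain ⟨r, ⟨hr0, hr1⟩, har⟩ := exists_mem_Ioo_lt_pow_mul ha 3
    filter_upwards [eventually_forall_mul_le hv hw hv0 hr1,
      hμ.eventually_mul_dotProduct_sub_le hm hr1] with t hvt hmt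
    exact har.trans_le (pow_three_mul_sInf_psiObjective_le hS hw hr0 hvt hmt)
  · refine eventually_sInf_image_lt hS (fun lam _ => ?_) ?_ hb
    · have hlim := ((continuous_psiObjective (𝒜 := 𝒜) lam).tendsto (μ, w)).comp (hm.prodMk_nhds hv)
      exact hlim
    · filter_upwards [hv0] with t ht
      exact ⟨0, by rintro _ ⟨lam, -, rfl⟩; exact psiObjective_nonneg ht (m t) lam⟩

open Filter in
theorem psi_continuous_general {d : ℕ} (𝒜 : Finset (Fin d → ℝ))
    (μ : Fin d → ℝ) (hstar : ∃! astar, IsBestArm 𝒜 μ astar)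
    (w : {a // a ∈ 𝒜} → ℝ) (hw : w ∈ simplexOn 𝒜) :
    ∃ U : Set (Fin d → ℝ), IsOpen U ∧ μ ∈ U ∧
      (∀ μ' ∈ U, ∃! astar', IsBestArm 𝒜 μ' astar') ∧
      ∀ (μs : ℕ → Fin d → ℝ) (ws : ℕ → {a // a ∈ 𝒜} → ℝ),
        (∀ t, μs t ∈ U) → (∀ t, ws t ∈ simplexOn 𝒜) →
        Tendsto μs atTop (nhds μ) → Tendsto ws atTop (nhds w) →
        Tendsto (fun t => psi 𝒜 (μs t) (ws t)) atTop (nhds (psi 𝒜 μ w)) := by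
  obtain ⟨astar, hbest, -⟩ := hstar
  refine ⟨{m | IsBestArm 𝒜 m astar}, isOpen_setOf_isBestArm 𝒜 astar, hbest,
    fun m hm => ⟨astar, hm, fun b hb => hb.unique hm⟩, ?_⟩
  intro μs ws hμsU hwsΛ hμs hws
  simp only [fun t => psi_eq_sInf_psiObjective (hμsU t) (ws t), psi_eq_sInf_psiObjective hbest]
  exact tendsto_sInf_psiObjective hbest (fun a => (hw.1 a).1)
    (Eventually.of_forall fun t a => ((hwsΛ t).1 a).1) hμs hws

open Filter in
/-- `ψ` is jointly continuous at `(μ, w)` for every `w ∈ Λ`: there is an open neighborhood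
`U` of `μ` on which the best arm is unique, and along any sequence `(μ_t, w_t) ∈ U × Λ`
converging to `(μ, w)`, `ψ(μ_t, w_t) → ψ(μ, w)`. -/
theorem psi_continuous {d : ℕ} (𝒜 : Finset (Fin d → ℝ))
    (hspan : Submodule.span ℝ (𝒜 : Set (Fin d → ℝ)) = ⊤)
    (μ : Fin d → ℝ) (hstar : ∃! astar, IsBestArm 𝒜 μ astar)
    (w : {a // a ∈ 𝒜} → ℝ) (hw : w ∈ simplexOn 𝒜) :
    ∃ U : Set (Fin d → ℝ), IsOpen U ∧ μ ∈ U ∧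
      (∀ μ' ∈ U, ∃! astar', IsBestArm 𝒜 μ' astar') ∧
      ∀ (μs : ℕ → Fin d → ℝ) (ws : ℕ → {a // a ∈ 𝒜} → ℝ),
        (∀ t, μs t ∈ U) → (∀ t, ws t ∈ simplexOn 𝒜) →
        Tendsto μs atTop (nhds μ) → Tendsto ws atTop (nhds w) →
        Tendsto (fun t => psi 𝒜 (μs t) (ws t)) atTop (nhds (psi 𝒜 μ w)) :=
  psi_continuous_general 𝒜 μ hstar w hw
end

section
/- (Forced exploration) Consider the sequence (a_t)_{t≥1} defined recursively by: i₀ = 1, and for every t ≥ 0, a_{t+1} = a₀(i_t) if λ_min(∑_{s=1}^t a_s a_sᵀ) < f(t) and a_{t+1} = b_t otherwise, with i_{t+1} = (i_t mod d) + 1_{{λ_min(∑_{s=1}^t a_s a_sᵀ) < f(t)}}. Then for all t ≥ 5d/4 + 1/(4d) + 3/2, one has λ_min( ∑_{s=1}^t a_s a_sᵀ ) ≥ f(t − d − 1). -/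
open Matrix

/-- The Euclidean norm of a vector in `ℝ^d`. -/
noncomputable def euclNorm {d : ℕ} (x : Fin d → ℝ) : ℝ :=
  Real.sqrt (∑ i, x i ^ 2)

/-- The smallest eigenvalue of a (symmetric) matrix, as the infimum of its Rayleigh
quotient over the unit sphere. -/
noncomputable def lambdaMin {d : ℕ} (M : Matrix (Fin d) (Fin d) ℝ) : ℝ :=
  sInf {r : ℝ | ∃ x : Fin d → ℝ, euclNorm x = 1 ∧ r = x ⬝ᵥ M.mulVec x}

/-!
Whenever `λ_min(V_s) < f(s)` the rule plays the next arm of `𝒜₀` in cyclic order, so `d`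
consecutive exploration rounds add exactly `V₀ = ∑_{a ∈ 𝒜₀} a aᵀ` to the design matrix and,
by superadditivity of `λ_min`, raise `λ_min` by at least `λ_min(V₀) = c √d`. Let `s < t` be
the last round with `λ_min(V_s) ≥ f(s)` (or `s = 0`). Rounds `s + 1, …, t - 1` all explore;
after discarding the first of them (its index `i_{s+1} = i_s mod d` may be `0`), they contain
`k = ⌊(t - s - 2)/d⌋` full cycles, whence
`λ_min(V_t) ≥ c (√s + k √d) ≥ c √(s + k d) ≥ c √(t - d - 1)`.
-/

open Finset

section Sums

variable {M : Type*} [AddCommMonoid M]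

theorem sum_range_add_mod (g : ℕ → M) (c d : ℕ) :
    ∑ r ∈ range d, g ((c + r) % d) = ∑ r ∈ range d, g r := by
  rcases Nat.eq_zero_or_pos d with rfl | hd
  · simp
  have : NeZero d := ⟨hd.ne'⟩
  rw [← Fin.sum_univ_eq_sum_range g, ← Fin.sum_univ_eq_sum_range (fun r => g ((c + r) % d))]
  calc ∑ r : Fin d, g ((c + r) % d) = ∑ r : Fin d, g ↑(Fin.ofNat d c + r) := by
        simp [Fin.val_add]
    _ = ∑ r : Fin d, g r := Equiv.sum_comp (Equiv.addLeft (Fin.ofNat d c)) (fun r : Fin d => g r)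

theorem sum_range_mul_add_mod (g : ℕ → M) (c d k : ℕ) :
    ∑ r ∈ range (k * d), g ((c + r) % d) = k • ∑ r ∈ range d, g r := by
  induction k with
  | zero => simp
  | succ k ih =>
    rw [add_mul, one_mul, sum_range_add, ih, succ_nsmul, ← sum_range_add_mod g c d]
    congr 1
    refine sum_congr rfl fun r _ => ?_
    rw [show c + (k * d + r) = c + r + k * d by ring, Nat.add_mul_mod_self_right]

theorem sum_Ioc_add_eq_sum_range (g : ℕ → M) (σ n : ℕ) :
    ∑ s ∈ Ioc σ (σ + n), g s = ∑ r ∈ range n, g (σ + r + 1) := by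
  rw [← Ico_add_one_add_one_eq_Ioc, sum_Ico_eq_sum_range]
  simp only [show σ + n + 1 - (σ + 1) = n by omega, add_right_comm]

theorem sum_range_add_one_eq_sum_Icc (g : ℕ → M) (d : ℕ) :
    ∑ r ∈ range d, g (r + 1) = ∑ j ∈ Icc 1 d, g j := by
  rw [range_eq_Ico, sum_Ico_add' g 0 d 1, zero_add, Ico_add_one_right_eq_Icc]

end Sums

theorem sqrt_add_nat_mul_le {x y : ℝ} (hx : 0 ≤ x) (hy : 0 ≤ y) (k : ℕ) :
    √(x + k * y) ≤ √x + k * √y := by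
  rw [Real.sqrt_le_left (by positivity)]
  have hk : (k : ℝ) ≤ k ^ 2 := by exact_mod_cast Nat.le_self_pow two_ne_zero k
  nlinarith [Real.sq_sqrt hx, Real.sq_sqrt hy, mul_nonneg (Nat.cast_nonneg k)
    (mul_nonneg (Real.sqrt_nonneg x) (Real.sqrt_nonneg y)), mul_le_mul_of_nonneg_right hk hy]

theorem sqrt_sub_le_sqrt_add_div_mul_sqrt {d : ℕ} (hd : 0 < d) (s t : ℕ) :
    √((t : ℝ) - d - 1) ≤ √s + ((t - s - 2) / d : ℕ) * √d := by
  set k := (t - s - 2) / d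
  have hlen : t ≤ s + k * d + d + 1 := by
    have h : t - s - 2 < d * (k + 1) := Nat.lt_mul_div_succ _ hd
    rw [mul_add, mul_one, mul_comm] at h
    omega
  have hlen : (t : ℝ) - d - 1 ≤ s + k * d := by
    have : (t : ℝ) ≤ s + k * d + d + 1 := by exact_mod_cast hlen
    linarith
  exact (Real.sqrt_le_sqrt hlen).trans (sqrt_add_nat_mul_le s.cast_nonneg d.cast_nonneg k)

theorem Nat.exists_last_lt {P : ℕ → Prop} (h0 : P 0) {t : ℕ} (ht : 0 < t) :
    ∃ s < t, P s ∧ ∀ r, s < r → r < t → ¬P r := by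
  classical
  refine ⟨Nat.findGreatest P (t - 1), ?_, Nat.findGreatest_spec (Nat.zero_le _) h0,
    fun r h1 h2 => Nat.findGreatest_is_greatest h1 (by omega)⟩
  have := Nat.findGreatest_le (P := P) (t - 1)
  omega

section RoundRobin

variable {d : ℕ}

theorem round_robin_eq {j : ℕ → ℕ} {n c : ℕ} (hc : c < d) (h0 : j 0 = c + 1)
    (hstep : ∀ r < n, j (r + 1) = j r % d + 1) : ∀ r ≤ n, j r = (c + r) % d + 1 := by
  intro r hr
  induction r with
  | zero => rw [h0, add_zero, Nat.mod_eq_of_lt hc]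
  | succ r ih => rw [hstep r hr, ih (by omega), Nat.mod_add_mod, add_assoc]

theorem sum_Ioc_round_robin {α M : Type*} [AddCommMonoid M] (g : α → M) {a a0 : ℕ → α}
    {i : ℕ → ℕ} {σ k : ℕ}
    (hexp : ∀ s, σ ≤ s → s < σ + k * d → a (s + 1) = a0 (i s) ∧ i (s + 1) = i s % d + 1)
    (h1 : 1 ≤ i σ) (h2 : i σ ≤ d) :
    ∑ s ∈ Ioc σ (σ + k * d), g (a s) = k • ∑ j ∈ Icc 1 d, g (a0 j) := by
  have hidx := round_robin_eq (j := fun r => i (σ + r)) (n := k * d) (c := i σ - 1) (by omega)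
    (by simp only [add_zero]; omega) fun r hr => (hexp (σ + r) (by omega) (by omega)).2
  calc ∑ s ∈ Ioc σ (σ + k * d), g (a s) = ∑ r ∈ range (k * d), g (a (σ + r + 1)) :=
        sum_Ioc_add_eq_sum_range _ σ _
    _ = ∑ r ∈ range (k * d), g (a0 ((i σ - 1 + r) % d + 1)) := by
        refine sum_congr rfl fun r hr => ?_
        have hr : r < k * d := mem_range.mp hr
        rw [(hexp (σ + r) (by omega) (by omega)).1, hidx r hr.le]
    _ = k • ∑ j ∈ Icc 1 d, g (a0 j) := by
        rw [sum_range_mul_add_mod (fun r => g (a0 (r + 1))),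
          sum_range_add_one_eq_sum_Icc (fun j => g (a0 j))]

end RoundRobin

section LambdaMin

variable {d : ℕ}

theorem abs_le_one_of_euclNorm_eq_one {x : Fin d → ℝ} (hx : euclNorm x = 1) (i : Fin d) :
    |x i| ≤ 1 := by
  have hsum : ∑ j, x j ^ 2 = 1 := Real.sqrt_eq_one.mp hx
  rw [← sq_le_one_iff_abs_le_one, ← hsum]
  exact single_le_sum (fun j _ => sq_nonneg (x j)) (mem_univ i)

theorem euclNorm_single (i : Fin d) : euclNorm (Pi.single i (1 : ℝ)) = 1 := by
  simp [euclNorm, Pi.single_apply]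

theorem pos_of_lambdaMin_pos {M : Matrix (Fin d) (Fin d) ℝ} (h : 0 < lambdaMin M) : 0 < d := by
  rw [Nat.pos_iff_ne_zero]
  rintro rfl
  simp [lambdaMin, euclNorm] at h

theorem lambdaMin_le (M : Matrix (Fin d) (Fin d) ℝ) {x : Fin d → ℝ} (hx : euclNorm x = 1) :
    lambdaMin M ≤ x ⬝ᵥ M *ᵥ x := by
  refine csInf_le ⟨-∑ i, ∑ j, |M i j|, ?_⟩ ⟨x, hx, rfl⟩
  rintro _ ⟨y, hy, rfl⟩
  refine neg_le_of_abs_le ?_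
  calc |y ⬝ᵥ M *ᵥ y| = |∑ i, ∑ j, y i * M i j * y j| := by
        simp only [dotProduct, mulVec, mul_sum, mul_assoc]
    _ ≤ ∑ i, ∑ j, |y i * M i j * y j| :=
        (abs_sum_le_sum_abs _ _).trans (sum_le_sum fun i _ => abs_sum_le_sum_abs _ _)
    _ ≤ ∑ i, ∑ j, |M i j| := by
        refine sum_le_sum fun i _ => sum_le_sum fun j _ => ?_
        calc |y i * M i j * y j| = |y i| * |M i j| * |y j| := by rw [abs_mul, abs_mul]
          _ ≤ 1 * |M i j| * 1 := by gcongr <;> exact abs_le_one_of_euclNorm_eq_one hy _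
          _ = |M i j| := by ring

theorem le_lambdaMin (hd : 0 < d) {M : Matrix (Fin d) (Fin d) ℝ} {c : ℝ}
    (h : ∀ x, euclNorm x = 1 → c ≤ x ⬝ᵥ M *ᵥ x) : c ≤ lambdaMin M :=
  le_csInf ⟨_, _, euclNorm_single ⟨0, hd⟩, rfl⟩ fun _ ⟨x, hx, hr⟩ => hr ▸ h x hx

theorem lambdaMin_add_le (hd : 0 < d) (A B : Matrix (Fin d) (Fin d) ℝ) :
    lambdaMin A + lambdaMin B ≤ lambdaMin (A + B) :=
  le_lambdaMin hd fun x hx => by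
    rw [add_mulVec, dotProduct_add]
    exact add_le_add (lambdaMin_le A hx) (lambdaMin_le B hx)

theorem lambdaMin_add_nsmul_le (hd : 0 < d) (A B : Matrix (Fin d) (Fin d) ℝ) (k : ℕ) :
    lambdaMin A + k * lambdaMin B ≤ lambdaMin (A + k • B) := by
  induction k with
  | zero => simp
  | succ k ih =>
    calc lambdaMin A + (k + 1 : ℕ) * lambdaMin B
        = lambdaMin A + k * lambdaMin B + lambdaMin B := by push_cast; ring
      _ ≤ lambdaMin (A + k • B + B) := (add_le_add_left ih _).trans (lambdaMin_add_le hd _ _)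
      _ = lambdaMin (A + (k + 1) • B) := by rw [succ_nsmul, add_assoc]

theorem dotProduct_sum_vecMulVec_mulVec {ι : Type*} (S : Finset ι) (v : ι → Fin d → ℝ)
    (x : Fin d → ℝ) :
    x ⬝ᵥ (∑ s ∈ S, vecMulVec (v s) (v s)) *ᵥ x = ∑ s ∈ S, (v s ⬝ᵥ x) ^ 2 := by
  simp [sum_mulVec, sum_dotProduct, vecMulVec_mulVec, sq, dotProduct_comm x]

theorem lambdaMin_sum_vecMulVec_self_nonneg {ι : Type*} (S : Finset ι)
    (v : ι → Fin d → ℝ) :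
    0 ≤ lambdaMin (∑ s ∈ S, vecMulVec (v s) (v s)) := by
  refine Real.sInf_nonneg ?_
  rintro _ ⟨x, -, rfl⟩
  rw [dotProduct_sum_vecMulVec_mulVec]
  positivity

end LambdaMin

section DesignMatrix

variable {d : ℕ}

noncomputable def designMatrix (v : ℕ → Fin d → ℝ) (t : ℕ) : Matrix (Fin d) (Fin d) ℝ :=
  ∑ s ∈ Icc 1 t, vecMulVec (v s) (v s)

theorem designMatrix_eq_add_sum_Ioc (v : ℕ → Fin d → ℝ) {s t : ℕ} (h : s ≤ t) :
    designMatrix v t = designMatrix v s + ∑ r ∈ Ioc s t, vecMulVec (v r) (v r) := by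
  have hIcc (n : ℕ) : Icc 1 n = Ioc 0 n := Icc_add_one_left_eq_Ioc 0 n
  rw [designMatrix, designMatrix, hIcc, hIcc, sum_Ioc_consecutive _ s.zero_le h]

theorem lambdaMin_designMatrix_mono (hd : 0 < d) (v : ℕ → Fin d → ℝ) :
    Monotone fun t => lambdaMin (designMatrix v t) := fun s t h =>
  calc lambdaMin (designMatrix v s)
      ≤ lambdaMin (designMatrix v s) + lambdaMin (∑ r ∈ Ioc s t, vecMulVec (v r) (v r)) :=
        le_add_of_nonneg_right (lambdaMin_sum_vecMulVec_self_nonneg _ v)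
    _ ≤ lambdaMin (designMatrix v t) := by
        rw [designMatrix_eq_add_sum_Ioc v h]; exact lambdaMin_add_le hd _ _

theorem lambdaMin_designMatrix_add_mul_le_of_round_robin (hd : 0 < d)
    {a a0 : ℕ → Fin d → ℝ} {i : ℕ → ℕ} {σ k : ℕ}
    (hexp : ∀ s, σ ≤ s → s < σ + k * d → a (s + 1) = a0 (i s) ∧ i (s + 1) = i s % d + 1)
    (h1 : 1 ≤ i σ) (h2 : i σ ≤ d) :
    lambdaMin (designMatrix a σ) + k * lambdaMin (designMatrix a0 d)
      ≤ lambdaMin (designMatrix a (σ + k * d)) := by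
  rw [designMatrix_eq_add_sum_Ioc a (Nat.le_add_right σ _),
    sum_Ioc_round_robin (fun v => vecMulVec v v) hexp h1 h2]
  exact lambdaMin_add_nsmul_le hd _ _ k

theorem lambdaMin_designMatrix_add_mul_le_of_explore (hd : 0 < d)
    {a a0 : ℕ → Fin d → ℝ} {i : ℕ → ℕ} {s t : ℕ} (hst : s < t)
    (hexp : ∀ r, s < r → r < t → a (r + 1) = a0 (i r) ∧ i (r + 1) = i r % d + 1) :
    lambdaMin (designMatrix a s) + ((t - s - 2) / d : ℕ) * lambdaMin (designMatrix a0 d)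
      ≤ lambdaMin (designMatrix a t) := by
  have hmono := lambdaMin_designMatrix_mono hd a
  set k := (t - s - 2) / d
  obtain rfl | hst : t = s + 1 ∨ s + 2 ≤ t := by omega
  · simpa [k] using hmono s.le_succ
  have hkd : k * d ≤ t - s - 2 := Nat.div_mul_le_self _ _
  have hi : i (s + 2) = i (s + 1) % d + 1 := (hexp (s + 1) (by omega) (by omega)).2
  have hlt := Nat.mod_lt (i (s + 1)) hd
  calc lambdaMin (designMatrix a s) + k * lambdaMin (designMatrix a0 d)
      ≤ lambdaMin (designMatrix a (s + 2)) + k * lambdaMin (designMatrix a0 d) := by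
        gcongr; exact hmono (by omega)
    _ ≤ lambdaMin (designMatrix a (s + 2 + k * d)) :=
        lambdaMin_designMatrix_add_mul_le_of_round_robin hd
          (fun r h1 h2 => hexp r (by omega) (by omega)) (by omega) (by omega)
    _ ≤ lambdaMin (designMatrix a t) := hmono (by omega)

end DesignMatrix

theorem forced_exploration_general {d : ℕ}
    (a0 : ℕ → Fin d → ℝ)
    (hpos : 0 < lambdaMin (∑ j ∈ Finset.Icc 1 d, vecMulVec (a0 j) (a0 j)))
    (b : ℕ → Fin d → ℝ)
    (f : ℝ → ℝ)
    (hf : ∀ x : ℝ, f x =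
      lambdaMin (∑ j ∈ Finset.Icc 1 d, vecMulVec (a0 j) (a0 j)) / Real.sqrt d * Real.sqrt x)
    (a : ℕ → Fin d → ℝ) (i : ℕ → ℕ)
    (ha : ∀ t : ℕ, a (t + 1) =
      if lambdaMin (∑ s ∈ Finset.Icc 1 t, vecMulVec (a s) (a s)) < f t then a0 (i t) else b t)
    (hi : ∀ t : ℕ, i (t + 1) = i t % d +
      if lambdaMin (∑ s ∈ Finset.Icc 1 t, vecMulVec (a s) (a s)) < f t then 1 else 0) :
    ∀ t : ℕ, (5 * d / 4 + 1 / (4 * d) + 3 / 2 : ℝ) ≤ t →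
      f ((t : ℝ) - d - 1) ≤ lambdaMin (∑ s ∈ Finset.Icc 1 t, vecMulVec (a s) (a s)) := by
  intro t ht
  set L := lambdaMin (designMatrix a0 d)
  have hf : ∀ x : ℝ, f x = L / √d * √x := hf
  have hd : 0 < d := pos_of_lambdaMin_pos hpos
  have ht : 0 < t := by
    exact_mod_cast (by positivity : (0 : ℝ) < 5 * d / 4 + 1 / (4 * d) + 3 / 2).trans_le ht
  have hf0 : f (0 : ℕ) ≤ lambdaMin (designMatrix a 0) := by
    rw [Nat.cast_zero, hf, Real.sqrt_zero, mul_zero]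
    exact lambdaMin_sum_vecMulVec_self_nonneg _ _
  obtain ⟨s, hst, hfs, hlast⟩ :=
    Nat.exists_last_lt (P := fun r : ℕ => f r ≤ lambdaMin (designMatrix a r)) hf0 ht
  have hexp : ∀ r, s < r → r < t → a (r + 1) = a0 (i r) ∧ i (r + 1) = i r % d + 1 := by
    intro r h1 h2
    have hr : lambdaMin (∑ q ∈ Icc 1 r, vecMulVec (a q) (a q)) < f r :=
      not_le.mp (hlast r h1 h2)
    exact ⟨by rw [ha, if_pos hr], by rw [hi, if_pos hr]⟩
  have hc : 0 ≤ L / √d := div_nonneg hpos.le (Real.sqrt_nonneg _)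
  calc f (t - d - 1) = L / √d * √(t - d - 1) := hf _
    _ ≤ L / √d * (√s + ((t - s - 2) / d : ℕ) * √d) :=
        mul_le_mul_of_nonneg_left (sqrt_sub_le_sqrt_add_div_mul_sqrt hd s t) hc
    _ = f s + ((t - s - 2) / d : ℕ) * L := by rw [hf]; field_simp
    _ ≤ lambdaMin (designMatrix a t) := by
        linarith [lambdaMin_designMatrix_add_mul_le_of_explore hd hst hexp]

/-- (Forced exploration) With `𝒜₀ = {a₀(1), …, a₀(d)} ⊆ 𝒜` such that
`λ_min(∑_{a∈𝒜₀} a aᵀ) > 0`, `f(x) = c_{𝒜₀}√x` where `c_{𝒜₀} = λ_min(∑_{a∈𝒜₀} a aᵀ)/√d`,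
and the recursion `i₀ = 1`, `a_{t+1} = a₀(i_t)` if `λ_min(∑_{s=1}^t a_s a_sᵀ) < f(t)`
(else `a_{t+1} = b_t`), `i_{t+1} = (i_t mod d) + 1_{λ_min < f(t)}`, one has
`λ_min(∑_{s=1}^t a_s a_sᵀ) ≥ f(t − d − 1)` for all `t ≥ 5d/4 + 1/(4d) + 3/2`. -/
theorem forced_exploration {d : ℕ} (𝒜 : Finset (Fin d → ℝ))
    (a0 : ℕ → Fin d → ℝ) (ha0 : ∀ j ∈ Finset.Icc 1 d, a0 j ∈ 𝒜)
    (hpos : 0 < lambdaMin (∑ j ∈ Finset.Icc 1 d, vecMulVec (a0 j) (a0 j)))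
    (b : ℕ → Fin d → ℝ) (hbmem : ∀ t, b t ∈ 𝒜)
    (f : ℝ → ℝ)
    (hf : ∀ x : ℝ, f x =
      lambdaMin (∑ j ∈ Finset.Icc 1 d, vecMulVec (a0 j) (a0 j)) / Real.sqrt d * Real.sqrt x)
    (a : ℕ → Fin d → ℝ) (i : ℕ → ℕ) (hi0 : i 0 = 1)
    (ha : ∀ t : ℕ, a (t + 1) =
      if lambdaMin (∑ s ∈ Finset.Icc 1 t, vecMulVec (a s) (a s)) < f t then a0 (i t) else b t)
    (hi : ∀ t : ℕ, i (t + 1) = i t % d +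
      if lambdaMin (∑ s ∈ Finset.Icc 1 t, vecMulVec (a s) (a s)) < f t then 1 else 0) :
    ∀ t : ℕ, (5 * d / 4 + 1 / (4 * d) + 3 / 2 : ℝ) ≤ t →
      f ((t : ℝ) - d - 1) ≤ lambdaMin (∑ s ∈ Finset.Icc 1 t, vecMulVec (a s) (a s)) :=
  forced_exploration_general a0 hpos b f hf a i ha hi
end

section
/- (Closed form of the generalized log-likelihood ratio) For all a, b ∈ ℝ^d with a ≠ b and all ε ≥ 0, inf_{μ ∈ ℝ^d : μᵀ(a−b) ≤ −ε} ½ ∑_{s=1}^t (r_s − μᵀa_s)² − inf_{μ ∈ ℝ^d : μᵀ(a−b) ≥ −ε} ½ ∑_{s=1}^t (r_s − μᵀa_s)² = sgn( μ̂ᵀ(a−b) + ε ) · ( μ̂ᵀ(a−b) + ε )² / ( 2 (a−b)ᵀ G⁻¹ (a−b) ). -/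
/-!
Write `F μ = ½ ∑ₛ (rₛ - μᵀaₛ)²`. The normal equations `G μ̂ = ∑ₛ rₛ aₛ` give
`F μ = F μ̂ + ½ (μ - μ̂)ᵀ G (μ - μ̂)`, and Cauchy–Schwarz for the form `G`, with equality along
`G⁻¹ c`, shows that the minimum of `νᵀ G ν` over the half-space `νᵀ c ≥ k` is
`max(k, 0)² / cᵀ G⁻¹ c`. With `m = μ̂ᵀ(a - b) + ε` the two constraint sets are the half-spaces
`(μ - μ̂)ᵀ(b - a) ≥ m` and `(μ - μ̂)ᵀ(a - b) ≥ -m`, and `max(m, 0)² - max(-m, 0)² = sgn(m) m²`.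
-/

open Matrix

namespace Matrix

variable {n ι : Type*} [Fintype n] [Fintype ι]

lemma dotProduct_sum_vecMulVec_mulVec (as : ι → n → ℝ) (x y : n → ℝ) :
    x ⬝ᵥ (∑ s, vecMulVec (as s) (as s)) *ᵥ y = ∑ s, (x ⬝ᵥ as s) * (as s ⬝ᵥ y) := by
  simp only [sum_mulVec, vecMulVec_mulVec, op_smul_eq_smul, dotProduct_sum, dotProduct_smul,
    smul_eq_mul, mul_comm]

lemma sum_sq_sub_dotProduct_eq_add {as : ι → n → ℝ} {rs : ι → ℝ} {μhat : n → ℝ}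
    (hnormal : (∑ s, vecMulVec (as s) (as s)) *ᵥ μhat = ∑ s, rs s • as s) (μ : n → ℝ) :
    ∑ s, (rs s - μ ⬝ᵥ as s) ^ 2 = ∑ s, (rs s - μhat ⬝ᵥ as s) ^ 2 +
      (μ - μhat) ⬝ᵥ (∑ s, vecMulVec (as s) (as s)) *ᵥ (μ - μhat) := by
  set ν := μ - μhat
  have hcross : ∑ s, (rs s - μhat ⬝ᵥ as s) * (ν ⬝ᵥ as s) = 0 := by
    have hnormal_ν := congrArg (ν ⬝ᵥ ·) hnormal
    simp only [dotProduct_sum_vecMulVec_mulVec, dotProduct_sum, dotProduct_smul,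
      smul_eq_mul] at hnormal_ν
    rw [← sub_eq_zero.mpr hnormal_ν.symm, ← Finset.sum_sub_distrib]
    exact Finset.sum_congr rfl fun s _ ↦ by rw [dotProduct_comm (as s)]; ring
  calc ∑ s, (rs s - μ ⬝ᵥ as s) ^ 2
      = ∑ s, ((rs s - μhat ⬝ᵥ as s) ^ 2 - 2 * ((rs s - μhat ⬝ᵥ as s) * (ν ⬝ᵥ as s)) +
          (ν ⬝ᵥ as s) * (as s ⬝ᵥ ν)) :=
        Finset.sum_congr rfl fun s _ ↦ by
          simp only [ν, sub_dotProduct, dotProduct_comm (as s)]; ring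
    _ = _ := by
        rw [Finset.sum_add_distrib, Finset.sum_sub_distrib, ← Finset.mul_sum, hcross,
          dotProduct_sum_vecMulVec_mulVec]
        ring

variable [DecidableEq n] {G : Matrix n n ℝ}

lemma PosDef.mulVec_inv_mulVec_s8 (hG : G.PosDef) (x : n → ℝ) : G *ᵥ (G⁻¹ *ᵥ x) = x := by
  rw [mulVec_mulVec, mul_nonsing_inv G hG.det_pos.ne'.isUnit, one_mulVec]

lemma PosDef.sq_dotProduct_le_mul (hG : G.PosDef) (ν c : n → ℝ) :
    (ν ⬝ᵥ c) ^ 2 ≤ (ν ⬝ᵥ G *ᵥ ν) * (c ⬝ᵥ G⁻¹ *ᵥ c) := by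
  set w := G⁻¹ *ᵥ c
  have hGw : G *ᵥ w = c := hG.mulVec_inv_mulVec_s8 c
  have hwGν : w ⬝ᵥ G *ᵥ ν = ν ⬝ᵥ c := by
    rw [dotProduct_mulVec, ← mulVec_transpose, ← conjTranspose_eq_transpose_of_trivial,
      hG.isHermitian.eq, hGw, dotProduct_comm]
  have hnonneg : ∀ x : ℝ, 0 ≤ (c ⬝ᵥ w) * (x * x) + (-2 * (ν ⬝ᵥ c)) * x + ν ⬝ᵥ G *ᵥ ν := by
    intro x
    have hquad := hG.posSemidef.dotProduct_mulVec_nonneg (ν - x • w)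
    simp only [star_trivial, mulVec_sub, mulVec_smul, hGw, sub_dotProduct, dotProduct_sub,
      smul_dotProduct, dotProduct_smul, hwGν, smul_eq_mul] at hquad
    nlinarith [dotProduct_comm c ν, dotProduct_comm w c]
  have hdiscrim := discrim_le_zero hnonneg
  rw [discrim] at hdiscrim
  linarith

lemma PosDef.isLeast_quadForm_halfSpace (hG : G.PosDef) {c : n → ℝ} (hc : c ≠ 0) (μ₀ : n → ℝ)
    (k : ℝ) :
    IsLeast ((fun μ ↦ (μ - μ₀) ⬝ᵥ G *ᵥ (μ - μ₀)) '' {μ | k ≤ μ ⬝ᵥ c})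
      (max (k - μ₀ ⬝ᵥ c) 0 ^ 2 / (c ⬝ᵥ G⁻¹ *ᵥ c)) := by
  set q := c ⬝ᵥ G⁻¹ *ᵥ c
  set m := max (k - μ₀ ⬝ᵥ c) 0
  have hq : 0 < q := by simpa using hG.inv.dotProduct_mulVec_pos hc
  have hwc : G⁻¹ *ᵥ c ⬝ᵥ c = q := dotProduct_comm _ _
  refine ⟨⟨μ₀ + (m / q) • G⁻¹ *ᵥ c, ?_, ?_⟩, ?_⟩
  · have : k - μ₀ ⬝ᵥ c ≤ m := le_max_left _ _
    simp only [Set.mem_ofPred_eq, add_dotProduct, smul_dotProduct, hwc, smul_eq_mul,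
      div_mul_cancel₀ m hq.ne']
    linarith
  · simp only [add_sub_cancel_left, mulVec_smul, hG.mulVec_inv_mulVec_s8, dotProduct_smul,
      smul_dotProduct, hwc, smul_eq_mul]
    field_simp
  · rintro _ ⟨μ, hμ, rfl⟩
    have hm : m ≤ |(μ - μ₀) ⬝ᵥ c| := by
      refine max_le ?_ (abs_nonneg _)
      rw [sub_dotProduct]
      exact (sub_le_sub_right hμ _).trans (le_abs_self _)
    rw [div_le_iff₀ hq]
    calc m ^ 2 ≤ ((μ - μ₀) ⬝ᵥ c) ^ 2 :=
          (pow_le_pow_left₀ (le_max_right _ _) hm 2).trans_eq (sq_abs _)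
      _ ≤ _ := hG.sq_dotProduct_le_mul _ c

theorem sInf_leastSquares_halfSpace {as : ι → n → ℝ} {rs : ι → ℝ}
    (hGdef : G = ∑ s, vecMulVec (as s) (as s)) (hG : G.PosDef) {μhat : n → ℝ}
    (hnormal : G *ᵥ μhat = ∑ s, rs s • as s) {c : n → ℝ} (hc : c ≠ 0) (k : ℝ) :
    sInf {v : ℝ | ∃ μ : n → ℝ, k ≤ μ ⬝ᵥ c ∧ v = (1 / 2) * ∑ s, (rs s - μ ⬝ᵥ as s) ^ 2} =
      (1 / 2) * ∑ s, (rs s - μhat ⬝ᵥ as s) ^ 2 +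
        max (k - μhat ⬝ᵥ c) 0 ^ 2 / (2 * (c ⬝ᵥ G⁻¹ *ᵥ c)) := by
  subst hGdef
  have hmono : Monotone fun x : ℝ ↦ (1 / 2) * ∑ s, (rs s - μhat ⬝ᵥ as s) ^ 2 + x / 2 :=
    fun x y hxy ↦ by dsimp only; linarith
  have hset : {v : ℝ | ∃ μ : n → ℝ, k ≤ μ ⬝ᵥ c ∧ v = (1 / 2) * ∑ s, (rs s - μ ⬝ᵥ as s) ^ 2} =
      (fun x : ℝ ↦ (1 / 2) * ∑ s, (rs s - μhat ⬝ᵥ as s) ^ 2 + x / 2) ''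
        ((fun μ ↦ (μ - μhat) ⬝ᵥ (∑ s, vecMulVec (as s) (as s)) *ᵥ (μ - μhat)) ''
          {μ | k ≤ μ ⬝ᵥ c}) := by
    ext v
    simp only [Set.image_image, Set.mem_image, Set.mem_ofPred_eq]
    refine exists_congr fun μ ↦ and_congr_right fun _ ↦ ?_
    rw [sum_sq_sub_dotProduct_eq_add hnormal μ, eq_comm]
    ring_nf
  rw [hset, (hmono.map_isLeast (hG.isLeast_quadForm_halfSpace hc μhat k)).csInf_eq]
  ring

end Matrix

lemma max_sq_sub_max_neg_sq (x : ℝ) : max x 0 ^ 2 - max (-x) 0 ^ 2 = Real.sign x * x ^ 2 := by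
  rcases lt_trichotomy x 0 with hx | rfl | hx
  · simp [Real.sign_of_neg hx, hx.le]
  · simp
  · simp [Real.sign_of_pos hx, hx.le]

theorem gllr_closed_form_general {d t : ℕ}
    (as : Fin t → Fin d → ℝ) (rs : Fin t → ℝ)
    (G : Matrix (Fin d) (Fin d) ℝ) (hGdef : G = ∑ s, vecMulVec (as s) (as s))
    (hG : G.PosDef)
    (μhat : Fin d → ℝ) (hμhat : μhat = G⁻¹.mulVec (∑ s, rs s • as s))
    (a b : Fin d → ℝ) (hab : a ≠ b) (ε : ℝ) :
    sInf {v : ℝ | ∃ μ : Fin d → ℝ, μ ⬝ᵥ (a - b) ≤ -ε ∧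
        v = (1 / 2) * ∑ s, (rs s - μ ⬝ᵥ as s) ^ 2} -
      sInf {v : ℝ | ∃ μ : Fin d → ℝ, -ε ≤ μ ⬝ᵥ (a - b) ∧
        v = (1 / 2) * ∑ s, (rs s - μ ⬝ᵥ as s) ^ 2} =
    Real.sign (μhat ⬝ᵥ (a - b) + ε) * (μhat ⬝ᵥ (a - b) + ε) ^ 2 /
      (2 * ((a - b) ⬝ᵥ G⁻¹.mulVec (a - b))) := by
  have hnormal : G *ᵥ μhat = ∑ s, rs s • as s := hμhat ▸ hG.mulVec_inv_mulVec_s8 _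
  have hflip : ∀ μ : Fin d → ℝ, μ ⬝ᵥ (a - b) ≤ -ε ↔ ε ≤ μ ⬝ᵥ (b - a) := fun μ ↦ by
    rw [← neg_sub b a, dotProduct_neg, le_neg, neg_neg]
  have hq : (b - a) ⬝ᵥ G⁻¹ *ᵥ (b - a) = (a - b) ⬝ᵥ G⁻¹ *ᵥ (a - b) := by
    rw [← neg_sub a b, mulVec_neg, neg_dotProduct, dotProduct_neg, neg_neg]
  have hμ : μhat ⬝ᵥ (b - a) = -(μhat ⬝ᵥ (a - b)) := by rw [← dotProduct_neg, neg_sub]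
  simp_rw [hflip]
  rw [sInf_leastSquares_halfSpace hGdef hG hnormal (sub_ne_zero.mpr hab.symm),
    sInf_leastSquares_halfSpace hGdef hG hnormal (sub_ne_zero.mpr hab), hq, hμ,
    ← max_sq_sub_max_neg_sq]
  ring_nf

/-- (Closed form of the generalized log-likelihood ratio) With `G = ∑_{s=1}^t a_s a_sᵀ`
positive definite and `μ̂ = G⁻¹ ∑_s a_s r_s`, for all `a ≠ b` and `ε ≥ 0`,
`inf_{μᵀ(a−b) ≤ −ε} ½∑(r_s − μᵀa_s)² − inf_{μᵀ(a−b) ≥ −ε} ½∑(r_s − μᵀa_s)²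
  = sgn(μ̂ᵀ(a−b)+ε)(μ̂ᵀ(a−b)+ε)²/(2(a−b)ᵀG⁻¹(a−b))`. -/
theorem gllr_closed_form {d t : ℕ} (ht : 1 ≤ t)
    (as : Fin t → Fin d → ℝ) (rs : Fin t → ℝ)
    (G : Matrix (Fin d) (Fin d) ℝ) (hGdef : G = ∑ s, vecMulVec (as s) (as s))
    (hG : G.PosDef)
    (μhat : Fin d → ℝ) (hμhat : μhat = G⁻¹.mulVec (∑ s, rs s • as s))
    (a b : Fin d → ℝ) (hab : a ≠ b) (ε : ℝ) (hε : 0 ≤ ε) :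
    sInf {v : ℝ | ∃ μ : Fin d → ℝ, μ ⬝ᵥ (a - b) ≤ -ε ∧
        v = (1 / 2) * ∑ s, (rs s - μ ⬝ᵥ as s) ^ 2} -
      sInf {v : ℝ | ∃ μ : Fin d → ℝ, -ε ≤ μ ⬝ᵥ (a - b) ∧
        v = (1 / 2) * ∑ s, (rs s - μ ⬝ᵥ as s) ^ 2} =
    Real.sign (μhat ⬝ᵥ (a - b) + ε) * (μhat ⬝ᵥ (a - b) + ε) ^ 2 /
      (2 * ((a - b) ⬝ᵥ G⁻¹.mulVec (a - b))) :=
  gllr_closed_form_general as rs G hGdef hG μhat hμhat a b hab ε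
end

section
/- Define for distinct a, b ∈ 𝒜 the quantity Z_{a,b} = sgn(μ̂ᵀ(a−b)) · (μ̂ᵀ(a−b))² / (2 (a−b)ᵀ G⁻¹ (a−b)). Then for every â ∈ argmax_{a∈𝒜} μ̂ᵀa, one has max_{a ∈ 𝒜} min_{b ∈ 𝒜∖{a}} Z_{a,b} = min_{b ∈ 𝒜∖{â}} Z_{â,b}. -/
open Matrix

/-!
The statistic `Z` is antisymmetric, `Z a b = -Z b a`, and `Z a b` has the sign of
`μ̂ᵀ(a - b)` because its denominator is a value of the positive definite form `G⁻¹`.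
Hence the row of an empirically best arm `â` is nonnegative and its column nonpositive:
every other arm `a` has `min_b Z_{a,b} ≤ Z_{a,â} ≤ 0 ≤ min_b Z_{â,b}`, so `â` attains
the max-min.
-/

theorem sSup_image_sInf_image_diff_eq_of_sign {α : Type*} {S : Set α} {f : α → α → ℝ}
    {â : α} (hS : S.Finite) (hâ : â ∈ S) (hrow : ∀ b ∈ S, 0 ≤ f â b)
    (hcol : ∀ a ∈ S, f a â ≤ 0) :
    sSup ((fun a => sInf (f a '' (S \ {a}))) '' S) = sInf (f â '' (S \ {â})) := by
  -- `Real.sInf_nonneg` also covers `S = {â}`, where the right-hand side is `sInf ∅ = 0`.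
  have hâ_nonneg : 0 ≤ sInf (f â '' (S \ {â})) := by
    refine Real.sInf_nonneg ?_
    rintro _ ⟨b, ⟨hb, -⟩, rfl⟩
    exact hrow b hb
  refine le_antisymm (csSup_le ⟨_, â, hâ, rfl⟩ ?_)
    (le_csSup (hS.image _).bddAbove ⟨â, hâ, rfl⟩)
  rintro _ ⟨a, ha, rfl⟩
  rcases eq_or_ne a â with rfl | hne
  · exact le_rfl
  calc sInf (f a '' (S \ {a})) ≤ f a â :=
        csInf_le (hS.sdiff.image _).bddBelow ⟨â, ⟨hâ, hne.symm⟩, rfl⟩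
    _ ≤ sInf (f â '' (S \ {â})) := (hcol a ha).trans hâ_nonneg

lemma Real.sign_mul_sq_div_nonneg {x y : ℝ} (hx : 0 ≤ x) (hy : 0 ≤ y) :
    0 ≤ Real.sign x * x ^ 2 / y := by
  rcases hx.eq_or_lt with rfl | hpos
  · simp
  · rw [Real.sign_of_pos hpos]
    positivity

lemma Real.sign_neg_mul_neg_sq_div (x y : ℝ) :
    Real.sign (-x) * (-x) ^ 2 / y = -(Real.sign x * x ^ 2 / y) := by
  rw [Real.sign_neg, neg_sq, neg_mul, neg_div]

theorem gllr_max_min_eq_general {d : ℕ} (𝒜 : Finset (Fin d → ℝ))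
    (G : Matrix (Fin d) (Fin d) ℝ)
    (hG : G.PosDef)
    (μhat : Fin d → ℝ)
    (Z : (Fin d → ℝ) → (Fin d → ℝ) → ℝ)
    (hZ : ∀ a b, Z a b = Real.sign (μhat ⬝ᵥ (a - b)) * (μhat ⬝ᵥ (a - b)) ^ 2 /
      (2 * ((a - b) ⬝ᵥ G⁻¹.mulVec (a - b))))
    (ahat : Fin d → ℝ) (hahat : ahat ∈ 𝒜) (hmax : ∀ b ∈ 𝒜, μhat ⬝ᵥ b ≤ μhat ⬝ᵥ ahat) :
    sSup ((fun a => sInf (Z a '' ((𝒜 : Set (Fin d → ℝ)) \ {a}))) '' (𝒜 : Set (Fin d → ℝ)))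
      = sInf (Z ahat '' ((𝒜 : Set (Fin d → ℝ)) \ {ahat})) := by
  have hanti : ∀ a b, Z a b = -Z b a := fun a b => by
    rw [hZ, hZ, ← neg_sub b a, dotProduct_neg, neg_dotProduct, mulVec_neg, dotProduct_neg,
      neg_neg, Real.sign_neg_mul_neg_sq_div]
  have hrow : ∀ b ∈ 𝒜, 0 ≤ Z ahat b := fun b hb => by
    rw [hZ]
    refine Real.sign_mul_sq_div_nonneg ?_ ?_
    · rw [dotProduct_sub]
      linarith [hmax b hb]
    · have hq := hG.inv.posSemidef.dotProduct_mulVec_nonneg (ahat - b)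
      simp only [star_trivial] at hq
      positivity
  refine sSup_image_sInf_image_diff_eq_of_sign 𝒜.finite_toSet hahat hrow fun a ha => ?_
  linarith [hanti a ahat, hrow a ha]

/-- With `Z_{a,b} = sgn(μ̂ᵀ(a−b)) (μ̂ᵀ(a−b))² / (2(a−b)ᵀG⁻¹(a−b))`, for every
`â ∈ argmax_{a∈𝒜} μ̂ᵀa` one has `max_{a∈𝒜} min_{b∈𝒜∖{a}} Z_{a,b} = min_{b∈𝒜∖{â}} Z_{â,b}`. -/
theorem gllr_max_min_eq {d t : ℕ} (𝒜 : Finset (Fin d → ℝ)) (hcard : 2 ≤ 𝒜.card)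
    (ht : 1 ≤ t) (as : Fin t → Fin d → ℝ) (rs : Fin t → ℝ)
    (G : Matrix (Fin d) (Fin d) ℝ) (hGdef : G = ∑ s, vecMulVec (as s) (as s))
    (hG : G.PosDef)
    (μhat : Fin d → ℝ) (hμhat : μhat = G⁻¹.mulVec (∑ s, rs s • as s))
    (Z : (Fin d → ℝ) → (Fin d → ℝ) → ℝ)
    (hZ : ∀ a b, Z a b = Real.sign (μhat ⬝ᵥ (a - b)) * (μhat ⬝ᵥ (a - b)) ^ 2 /
      (2 * ((a - b) ⬝ᵥ G⁻¹.mulVec (a - b))))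
    (ahat : Fin d → ℝ) (hahat : ahat ∈ 𝒜) (hmax : ∀ b ∈ 𝒜, μhat ⬝ᵥ b ≤ μhat ⬝ᵥ ahat) :
    sSup ((fun a => sInf (Z a '' ((𝒜 : Set (Fin d → ℝ)) \ {a}))) '' (𝒜 : Set (Fin d → ℝ)))
      = sInf (Z ahat '' ((𝒜 : Set (Fin d → ℝ)) \ {ahat})) :=
  gllr_max_min_eq_general 𝒜 G hG μhat Z hZ ahat hahat hmax
end

section
/- (Confusing parameters on the sphere) Let μ, λ ∈ ℝ^d be nonzero and let ε > 0. If μᵀ( a*_μ − a*_λ ) > (1 + √(‖μ‖/‖λ‖))² ε, then the ε-optimal sets are disjoint: for every a ∈ S^{d−1} with μᵀ( a*_μ − a ) ≤ ε, one has λᵀ( a*_λ − a ) > ε. -/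
/-!
For a unit vector `b`, `⟪η, a*_η - b⟫ = ‖η‖/2 · ‖a*_η - b‖²`, so an `ε`-optimal arm for `η` lies within
`√(2ε/‖η‖)` of `a*_η`. If some `a` were `ε`-optimal for both `μ` and `λ`, then
`‖a*_μ - a*_λ‖ ≤ √(2ε/‖μ‖) + √(2ε/‖λ‖) = (1 + √(‖μ‖/‖λ‖)) √(2ε/‖μ‖)`, and feeding this back
into the identity gives `⟪μ, a*_μ - a*_λ⟫ ≤ (1 + √(‖μ‖/‖λ‖))² ε`.
-/

/-- For a nonzero vector `η`, the unique maximizer of `a ↦ ⟪η, a⟫` over the unit sphere. -/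
noncomputable def sphereBestArm {d : ℕ} (η : EuclideanSpace ℝ (Fin d)) :
    EuclideanSpace ℝ (Fin d) :=
  ‖η‖⁻¹ • η

theorem real_inner_sub_eq_half_norm_sub_sq {E : Type*} [NormedAddCommGroup E]
    [InnerProductSpace ℝ E] {u b : E} (hu : ‖u‖ = 1) (hb : ‖b‖ = 1) :
    inner ℝ u (u - b) = ‖u - b‖ ^ 2 / 2 := by
  rw [norm_sub_sq_real, inner_sub_right, real_inner_self_eq_norm_sq, hu, hb]
  ring

namespace sphereBestArm

variable {d : ℕ} {η : EuclideanSpace ℝ (Fin d)}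

theorem norm_smul_self (hη : η ≠ 0) : ‖η‖ • sphereBestArm η = η :=
  smul_inv_smul₀ (norm_ne_zero_iff.mpr hη) η

theorem norm_eq_one (hη : η ≠ 0) : ‖sphereBestArm η‖ = 1 := by
  rw [sphereBestArm, norm_smul, norm_inv, norm_norm, inv_mul_cancel₀ (norm_ne_zero_iff.mpr hη)]

theorem inner_sub_eq (hη : η ≠ 0) {b : EuclideanSpace ℝ (Fin d)} (hb : ‖b‖ = 1) :
    inner ℝ η (sphereBestArm η - b) = ‖η‖ / 2 * ‖sphereBestArm η - b‖ ^ 2 := by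
  nth_rw 1 [← norm_smul_self hη]
  rw [real_inner_smul_left, real_inner_sub_eq_half_norm_sub_sq (norm_eq_one hη) hb]
  ring

theorem norm_sub_le_of_inner_sub_le (hη : η ≠ 0) {a : EuclideanSpace ℝ (Fin d)} (ha : ‖a‖ = 1)
    {ε : ℝ} (hopt : inner ℝ η (sphereBestArm η - a) ≤ ε) :
    ‖sphereBestArm η - a‖ ≤ Real.sqrt (2 * ε / ‖η‖) := by
  have hpos : 0 < ‖η‖ := norm_pos_iff.mpr hη
  rw [inner_sub_eq hη ha] at hopt
  refine (abs_of_nonneg (norm_nonneg _)).symm.le.trans (Real.abs_le_sqrt ?_)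
  rw [le_div_iff₀ hpos]
  linarith

end sphereBestArm

/-- (Confusing parameters on the sphere) If
`μᵀ(a*_μ − a*_λ) > (1 + √(‖μ‖/‖λ‖))² ε`, then the `ε`-optimal sets are disjoint:
for every unit vector `a` with `μᵀ(a*_μ − a) ≤ ε`, one has `λᵀ(a*_λ − a) > ε`. -/
theorem confusing_parameters_on_sphere {d : ℕ} (μ lam : EuclideanSpace ℝ (Fin d))
    (hμ : μ ≠ 0) (hlam : lam ≠ 0) (ε : ℝ) (hε : 0 < ε)
    (hconf : (1 + Real.sqrt (‖μ‖ / ‖lam‖)) ^ 2 * ε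
      < (inner ℝ μ (sphereBestArm μ - sphereBestArm lam) : ℝ)) :
    ∀ a : EuclideanSpace ℝ (Fin d), ‖a‖ = 1 →
      (inner ℝ μ (sphereBestArm μ - a) : ℝ) ≤ ε →
      ε < (inner ℝ lam (sphereBestArm lam - a) : ℝ) := by
  intro a ha haμ
  by_contra! halam
  have hμpos : 0 < ‖μ‖ := norm_pos_iff.mpr hμ
  set r := Real.sqrt (2 * ε / ‖μ‖)
  set s := Real.sqrt (‖μ‖ / ‖lam‖)
  have hr : ‖μ‖ / 2 * r ^ 2 = ε := by
    rw [Real.sq_sqrt (by positivity)]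
    field_simp
  have hsr : Real.sqrt (2 * ε / ‖lam‖) = s * r := by
    rw [← Real.sqrt_mul (by positivity)]
    congr 1
    field_simp
  have hμa := sphereBestArm.norm_sub_le_of_inner_sub_le hμ ha haμ
  have hlama := sphereBestArm.norm_sub_le_of_inner_sub_le hlam ha halam
  rw [hsr] at hlama
  have hdist : ‖sphereBestArm μ - sphereBestArm lam‖ ≤ (1 + s) * r := by
    calc _ ≤ ‖sphereBestArm μ - a‖ + ‖a - sphereBestArm lam‖ :=
          norm_sub_le_norm_sub_add_norm_sub _ _ _
      _ ≤ (1 + s) * r := by rw [norm_sub_rev a]; linarith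
  have : inner ℝ μ (sphereBestArm μ - sphereBestArm lam) ≤ (1 + s) ^ 2 * ε :=
    calc _ = ‖μ‖ / 2 * ‖sphereBestArm μ - sphereBestArm lam‖ ^ 2 :=
          sphereBestArm.inner_sub_eq hμ (sphereBestArm.norm_eq_one hlam)
      _ ≤ ‖μ‖ / 2 * ((1 + s) * r) ^ 2 := by gcongr
      _ = (1 + s) ^ 2 * ε := by rw [← hr]; ring
  linarith
end
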